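/- arXiv:1711.03315 — 4 statements merged into one kernel-verified Lean document; each statement's English description precedes it below -/
import Mathlib

section
/- Let K ⊆ ℝⁿ × ℝ be a closed set, y₀ ∈ K, d ∈ ℝⁿ, and set d₁ := (d, 1). If v₀ belongs to the metric projection of d₁ onto T_K(y₀) ∩ (ℝⁿ × {1}), then there exists ζ ∈ N_K(y₀) such that d₁ − v₀ = (Pr ζ, 0), where Pr : ℝⁿ × ℝ → ℝⁿ denotes the projection onto the first n coordinates. -/
/-!
Write `w = d - Pr v₀`, so that `d₁ - v₀ = (w, 0)`. For a large weight `β`, take points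
`y₀ + t u ∈ K` with `t → 0⁺`, `u → v₀`, shift them by `β⁻¹ t (w, 0)` and project back onto
`K` for the quadratic form `(x, r) ↦ ‖x‖² + β r²` instead of the Euclidean norm. The
projection residuals give proximal normals of the form `(w + h, β τ)`, which converge to a
limiting normal, while the projected points show that `v₀ - β⁻¹ (h, τ)` is tangent.
Rescaling this tangent vector into the slice `ℝⁿ × {1}` and comparing it with the
minimality of `v₀` bounds `β ‖h‖²` and `(β τ)²` independently of `β`; letting `β → ∞`
gives a limiting normal `ζ` with `Pr ζ = w`.
-/

open Set Filter Metric MeasureTheory Topology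

noncomputable section

/-- The Bouligand tangent cone to `K` at `y`: vectors `v` for which there are sequences
`t k → 0⁺` and `w k → v` with `y + t k • w k ∈ K`. -/
def bouligandTangentCone {X : Type*} [NormedAddCommGroup X] [NormedSpace ℝ X]
    (K : Set X) (y : X) : Set X :=
  {v | ∃ t : ℕ → ℝ, ∃ w : ℕ → X,
    (∀ k, 0 < t k) ∧ Tendsto t atTop (𝓝 0) ∧ Tendsto w atTop (𝓝 v) ∧
    ∀ k, y + t k • w k ∈ K}

/-- Proximal normals: `ζ` with `dist (y + t • ζ) K = t * ‖ζ‖` for some `t > 0`. -/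
def proxNormalCone {X : Type*} [NormedAddCommGroup X] [NormedSpace ℝ X]
    (K : Set X) (y : X) : Set X :=
  {ζ | ∃ t : ℝ, 0 < t ∧ infDist (y + t • ζ) K = t * ‖ζ‖}

/-- The cone of limiting normals: limits of proximal normals at nearby points of `K`. -/
def limitingNormalCone {X : Type*} [NormedAddCommGroup X] [NormedSpace ℝ X]
    (K : Set X) (y : X) : Set X :=
  {ζ | ∃ yk : ℕ → X, ∃ ζk : ℕ → X,
    (∀ k, yk k ∈ K) ∧ (∀ k, ζk k ∈ proxNormalCone K (yk k)) ∧
    Tendsto yk atTop (𝓝 y) ∧ Tendsto ζk atTop (𝓝 ζ)}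

/-- Metric projection of `d` onto `A`. -/
def metricProj {X : Type*} [NormedAddCommGroup X] (A : Set X) (d : X) : Set X :=
  {a ∈ A | ‖d - a‖ = infDist d A}

/-- `ℝⁿ` with the Euclidean norm. -/
abbrev En (n : ℕ) := EuclideanSpace ℝ (Fin n)

/-- `ℝⁿ × ℝ` with the Euclidean (L²) norm. -/
abbrev Yn (n : ℕ) := WithLp 2 (En n × ℝ)

/-- The pair `(x, t)` as an element of `ℝⁿ × ℝ`. -/
def toY {n : ℕ} (x : En n) (t : ℝ) : Yn n := (WithLp.equiv 2 (En n × ℝ)).symm (x, t)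

/-- `Pr : ℝⁿ × ℝ → ℝⁿ`, projection on the first `n` coordinates. -/
def PrY {n : ℕ} (y : Yn n) : En n := ((WithLp.equiv 2 (En n × ℝ)) y).1

/-- The last ("time") coordinate of an element of `ℝⁿ × ℝ`. -/
def tY {n : ℕ} (y : Yn n) : ℝ := ((WithLp.equiv 2 (En n × ℝ)) y).2

/-- The hyperplane `ℝⁿ × {1}`. -/
def sliceOne (n : ℕ) : Set (Yn n) := {y | tY y = 1}


open scoped RealInnerProductSpace

section Normals

variable {X : Type*} [NormedAddCommGroup X] [NormedSpace ℝ X]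

lemma smul_mem_bouligandTangentCone {K : Set X} {y v : X} (hv : v ∈ bouligandTangentCone K y)
    {c : ℝ} (hc : 0 < c) : c • v ∈ bouligandTangentCone K y := by
  obtain ⟨t, w, ht, htlim, hwlim, hK⟩ := hv
  refine ⟨fun k => t k / c, fun k => c • w k, fun k => div_pos (ht k) hc,
    by simpa using htlim.div_const c, hwlim.const_smul c, fun k => ?_⟩
  rw [smul_smul, div_mul_cancel₀ _ hc.ne']
  exact hK k

lemma smul_mem_proxNormalCone {K : Set X} {y ζ : X} (hζ : ζ ∈ proxNormalCone K y)
    {c : ℝ} (hc : 0 < c) : c • ζ ∈ proxNormalCone K y := by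
  obtain ⟨t, ht, hdist⟩ := hζ
  refine ⟨t / c, div_pos ht hc, ?_⟩
  rw [smul_smul, div_mul_cancel₀ _ hc.ne', hdist, norm_smul, Real.norm_of_nonneg hc.le]
  field_simp

lemma mem_limitingNormalCone_iff_mem_closure {K : Set X} {y ζ : X} :
    ζ ∈ limitingNormalCone K y ↔
      (y, ζ) ∈ closure {p : X × X | p.1 ∈ K ∧ p.2 ∈ proxNormalCone K p.1} := by
  rw [mem_closure_iff_seq_limit]
  constructor
  · rintro ⟨yk, ζk, hK, hprox, hy, hζ⟩
    exact ⟨fun k => (yk k, ζk k), fun k => ⟨hK k, hprox k⟩, hy.prodMk_nhds hζ⟩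
  · rintro ⟨p, hp, hlim⟩
    exact ⟨fun k => (p k).1, fun k => (p k).2, fun k => (hp k).1, fun k => (hp k).2,
      (continuous_fst.tendsto _).comp hlim, (continuous_snd.tendsto _).comp hlim⟩

lemma isClosed_limitingNormalCone (K : Set X) (y : X) : IsClosed (limitingNormalCone K y) := by
  have : limitingNormalCone K y =
      (fun ζ => (y, ζ)) ⁻¹' closure {p : X × X | p.1 ∈ K ∧ p.2 ∈ proxNormalCone K p.1} := by
    ext ζ
    exact mem_limitingNormalCone_iff_mem_closure
  rw [this]
  exact isClosed_closure.preimage (by fun_prop)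

lemma mem_limitingNormalCone_of_tendsto {ι : Type*} {l : Filter ι} [l.NeBot] {K : Set X}
    {y ζ : X} {yk ζk : ι → X} (hy : Tendsto yk l (𝓝 y)) (hζ : Tendsto ζk l (𝓝 ζ))
    (hprox : ∀ᶠ k in l, yk k ∈ K ∧ ζk k ∈ proxNormalCone K (yk k)) :
    ζ ∈ limitingNormalCone K y :=
  mem_limitingNormalCone_iff_mem_closure.2 (mem_closure_of_tendsto (hy.prodMk_nhds hζ) hprox)

end Normals

section Proximal

variable {E : Type*} [NormedAddCommGroup E] [InnerProductSpace ℝ E]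

lemma mem_proxNormalCone_of_two_inner_le {K : Set E} {z g : E} {r σ : ℝ} (hz : z ∈ K)
    (hr : 0 < r) (hσ : 0 ≤ σ) (h : ∀ x ∈ K, ‖x - z‖ ≤ r → 2 * ⟪g, x - z⟫ ≤ σ * ‖x - z‖ ^ 2) :
    g ∈ proxNormalCone K z := by
  set t := min (1 / (σ + 1)) (r / (2 * ‖g‖ + 1))
  have ht : 0 < t := lt_min (by positivity) (by positivity)
  have htσ : t * σ ≤ 1 := by
    have : t * (σ + 1) ≤ 1 := (le_div_iff₀ (by positivity)).1 (min_le_left _ _)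
    nlinarith
  have htg : 2 * t * ‖g‖ ≤ r := by
    have : t * (2 * ‖g‖ + 1) ≤ r := (le_div_iff₀ (by positivity)).1 (min_le_right _ _)
    nlinarith
  have hnorm : ‖t • g‖ = t * ‖g‖ := by rw [norm_smul, Real.norm_of_nonneg ht.le]
  refine ⟨t, ht, le_antisymm ?_ ((le_infDist ⟨z, hz⟩).2 fun x hx => ?_)⟩
  · calc infDist (z + t • g) K ≤ dist (z + t • g) z := infDist_le_dist_of_mem hz
      _ = t * ‖g‖ := by rw [dist_eq_norm, add_sub_cancel_left, hnorm]
  rw [dist_comm, dist_eq_norm, show x - (z + t • g) = (x - z) - t • g by abel]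
  by_cases hxr : ‖x - z‖ ≤ r
  · have hle := h x hx hxr
    have hsq : (t * ‖g‖) ^ 2 ≤ ‖(x - z) - t • g‖ ^ 2 := by
      rw [norm_sub_sq_real, real_inner_smul_right, hnorm, real_inner_comm]
      nlinarith [sq_nonneg ‖x - z‖]
    exact (pow_le_pow_iff_left₀ (by positivity) (norm_nonneg _) two_ne_zero).1 hsq
  · calc t * ‖g‖ ≤ ‖x - z‖ - ‖t • g‖ := by rw [hnorm]; linarith
      _ ≤ ‖(x - z) - t • g‖ := norm_sub_norm_le _ _

lemma two_inner_le_of_isMinOn {A : E →L[ℝ] E} (hA : (A : E →ₗ[ℝ] E).IsSymmetric) {s : Set E}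
    {p z x : E} (hmin : IsMinOn (fun x => ⟪A (p - x), p - x⟫) s z) (hx : x ∈ s) :
    2 * ⟪A (p - z), x - z⟫ ≤ ‖A‖ * ‖x - z‖ ^ 2 := by
  have hexp : ⟪A (p - x), p - x⟫ =
      ⟪A (p - z), p - z⟫ - 2 * ⟪A (p - z), x - z⟫ + ⟪A (x - z), x - z⟫ := by
    have hsymm : ⟪A (x - z), p - z⟫ = ⟪A (p - z), x - z⟫ := by
      rw [real_inner_comm]; exact (hA (p - z) (x - z)).symm
    rw [show p - x = (p - z) - (x - z) by abel]
    generalize p - z = a, x - z = e at hsymm ⊢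
    rw [map_sub, inner_sub_left, inner_sub_right, inner_sub_right, hsymm]
    ring
  have hbound : ⟪A (x - z), x - z⟫ ≤ ‖A‖ * ‖x - z‖ ^ 2 :=
    calc ⟪A (x - z), x - z⟫ ≤ ‖A (x - z)‖ * ‖x - z‖ := real_inner_le_norm _ _
      _ ≤ ‖A‖ * ‖x - z‖ * ‖x - z‖ := by gcongr; exact A.le_opNorm _
      _ = ‖A‖ * ‖x - z‖ ^ 2 := by ring
  have := isMinOn_iff.1 hmin x hx
  linarith

lemma mem_proxNormalCone_of_isMinOn {A : E →L[ℝ] E} (hA : (A : E →ₗ[ℝ] E).IsSymmetric)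
    {K : Set E} {y₀ p z : E} {ρ : ℝ} (hz : z ∈ K) (hzρ : dist z y₀ < ρ)
    (hmin : IsMinOn (fun x => ⟪A (p - x), p - x⟫) (K ∩ closedBall y₀ ρ) z) :
    A (p - z) ∈ proxNormalCone K z := by
  refine mem_proxNormalCone_of_two_inner_le hz (sub_pos.2 hzρ) (norm_nonneg A) fun x hx hxz => ?_
  refine two_inner_le_of_isMinOn hA hmin ⟨hx, ?_⟩
  calc dist x y₀ ≤ dist x z + dist z y₀ := dist_triangle _ _ _
    _ ≤ ρ := by rw [dist_eq_norm]; linarith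

end Proximal

section Penalization

variable {E : Type*} [NormedAddCommGroup E] [InnerProductSpace ℝ E] [ProperSpace E]

lemma isCompact_setOf_inner_add_le {A : E →L[ℝ] E} (hcoer : ∀ x, ‖x‖ ^ 2 ≤ ⟪A x, x⟫) (W : E) :
    IsCompact {θ | ⟪A (W + θ), W + θ⟫ ≤ ⟪A W, W⟫} := by
  refine (isCompact_closedBall (-W) √⟪A W, W⟫).of_isClosed_subset
    (isClosed_le (by fun_prop) continuous_const) fun θ hθ => ?_
  rw [mem_closedBall_iff_norm, sub_neg_eq_add, add_comm]
  exact (Real.le_sqrt (norm_nonneg _) ((sq_nonneg _).trans (hcoer W))).2 ((hcoer _).trans hθ)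

/-- `x - c • θ` is a minimizer of `y ↦ ⟪A (x + c • W - y), x + c • W - y⟫` over
`K ∩ closedBall y₀ 1`. -/
lemma exists_penalized_step {K : Set E} (hK : IsClosed K) {y₀ : E} (hy₀ : y₀ ∈ K)
    {A : E →L[ℝ] E} (hA : (A : E →ₗ[ℝ] E).IsSymmetric) (x W : E) {c : ℝ} (hc : 0 < c) :
    ∃ θ, x - c • θ ∈ K ∧ (x ∈ K ∩ closedBall y₀ 1 → ⟪A (W + θ), W + θ⟫ ≤ ⟪A W, W⟫) ∧
      (dist (x - c • θ) y₀ < 1 → A (W + θ) ∈ proxNormalCone K (x - c • θ)) := by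
  obtain ⟨z, hz, hzmin⟩ := ((isCompact_closedBall y₀ 1).inter_left hK).exists_isMinOn
    ⟨y₀, hy₀, mem_closedBall_self zero_le_one⟩
    (f := fun y => ⟪A (x + c • W - y), x + c • W - y⟫) (by fun_prop)
  set θ := c⁻¹ • (x + c • W - z) - W
  have hpz : x + c • W - z = c • (W + θ) := by
    simp only [θ, add_sub_cancel, smul_smul, mul_inv_cancel₀ hc.ne', one_smul]
  clear_value θ
  have hz_eq : x - c • θ = z := by linear_combination (norm := module) hpz
  refine ⟨θ, hz_eq ▸ hz.1, fun hx => ?_, fun hzy => ?_⟩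
  · have hcmp := isMinOn_iff.1 hzmin x hx
    rw [hpz, add_sub_cancel_left] at hcmp
    simp only [map_smul, real_inner_smul_left, real_inner_smul_right] at hcmp
    exact le_of_mul_le_mul_left (le_of_mul_le_mul_left hcmp hc) hc
  · rw [hz_eq] at hzy ⊢
    have hprox := mem_proxNormalCone_of_isMinOn hA hz.1 hzy hzmin
    rw [hpz, map_smul] at hprox
    have := smul_mem_proxNormalCone hprox (inv_pos.2 hc)
    rwa [smul_smul, inv_mul_cancel₀ hc.ne', one_smul] at this

/-- For a tangent vector `v = lim u k` along `t k → 0⁺`, penalized projection steps from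
`y₀ + t k • u k` with `c = s * t k` give points `y₀ + t k • (u k - s • θ k)` of `K` with proximal
normals `A (W + θ k)`; a cluster point of `θ` does the job. -/
lemma exists_penalized_limitingNormal {K : Set E} (hK : IsClosed K) {y₀ v : E} (hy₀ : y₀ ∈ K)
    (hv : v ∈ bouligandTangentCone K y₀) {A : E →L[ℝ] E} (hA : (A : E →ₗ[ℝ] E).IsSymmetric)
    (hcoer : ∀ x, ‖x‖ ^ 2 ≤ ⟪A x, x⟫) (W : E) {s : ℝ} (hs : 0 < s) :
    ∃ θ, ⟪A (W + θ), W + θ⟫ ≤ ⟪A W, W⟫ ∧ v - s • θ ∈ bouligandTangentCone K y₀ ∧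
      A (W + θ) ∈ limitingNormalCone K y₀ := by
  obtain ⟨t, u, ht, htlim, hulim, hKu⟩ := hv
  choose θ hθK hθS hθprox using fun k =>
    exists_penalized_step hK hy₀ hA (y₀ + t k • u k) W (mul_pos hs (ht k))
  have hz_eq : ∀ k, y₀ + t k • u k - (s * t k) • θ k = y₀ + t k • (u k - s • θ k) := fun k => by
    module
  simp only [hz_eq] at hθK hθprox
  have hθ_eventually : ∀ᶠ k in atTop, θ k ∈ {θ | ⟪A (W + θ), W + θ⟫ ≤ ⟪A W, W⟫} := by
    have hx : Tendsto (fun k => y₀ + t k • u k) atTop (𝓝 y₀) := by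
      simpa using tendsto_const_nhds.add (htlim.smul hulim)
    filter_upwards [hx.eventually (closedBall_mem_nhds y₀ one_pos)] with k hk
    exact hθS k ⟨hKu k, hk⟩
  obtain ⟨θ₀, hθ₀, φ, hφ, hθφ⟩ :=
    (isCompact_setOf_inner_add_le hcoer W).tendsto_subseq' hθ_eventually.frequently
  have huφ : Tendsto (fun k => u (φ k) - s • θ (φ k)) atTop (𝓝 (v - s • θ₀)) :=
    (hulim.comp hφ.tendsto_atTop).sub (hθφ.const_smul s)
  have hzφ : Tendsto (fun k => y₀ + t (φ k) • (u (φ k) - s • θ (φ k))) atTop (𝓝 y₀) := by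
    simpa using tendsto_const_nhds.add ((htlim.comp hφ.tendsto_atTop).smul huφ)
  refine ⟨θ₀, hθ₀, ⟨t ∘ φ, _, fun k => ht _, htlim.comp hφ.tendsto_atTop, huφ,
    fun k => hθK (φ k)⟩, ?_⟩
  refine mem_limitingNormalCone_of_tendsto hzφ ((A.continuous.tendsto _).comp (hθφ.const_add W)) ?_
  filter_upwards [hzφ.eventually (ball_mem_nhds y₀ one_pos)] with k hk
  exact ⟨hθK (φ k), hθprox (φ k) hk⟩

end Penalization

section Slice

variable {n : ℕ}

@[simp] lemma PrY_toY (x : En n) (t : ℝ) : PrY (toY x t) = x := rfl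
@[simp] lemma tY_toY (x : En n) (t : ℝ) : tY (toY x t) = t := rfl
@[simp] lemma PrY_add (a b : Yn n) : PrY (a + b) = PrY a + PrY b := rfl
@[simp] lemma PrY_sub (a b : Yn n) : PrY (a - b) = PrY a - PrY b := rfl
@[simp] lemma PrY_smul (c : ℝ) (a : Yn n) : PrY (c • a) = c • PrY a := rfl
@[simp] lemma tY_add (a b : Yn n) : tY (a + b) = tY a + tY b := rfl
@[simp] lemma tY_sub (a b : Yn n) : tY (a - b) = tY a - tY b := rfl
@[simp] lemma tY_smul (c : ℝ) (a : Yn n) : tY (c • a) = c * tY a := rfl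

lemma Yn_ext {a b : Yn n} (h₁ : PrY a = PrY b) (h₂ : tY a = tY b) : a = b :=
  (WithLp.equiv 2 (En n × ℝ)).injective (Prod.ext h₁ h₂)

@[fun_prop] lemma continuous_PrY : Continuous (PrY (n := n)) :=
  continuous_fst.comp (WithLp.prod_continuous_ofLp _ _ _)

@[fun_prop] lemma continuous_tY : Continuous (tY (n := n)) :=
  continuous_snd.comp (WithLp.prod_continuous_ofLp _ _ _)

lemma inner_Yn (a b : Yn n) : ⟪a, b⟫ = ⟪PrY a, PrY b⟫ + tY a * tY b := by
  rw [WithLp.prod_inner_apply]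
  simp [PrY, tY, mul_comm]

lemma norm_sq_Yn (a : Yn n) : ‖a‖ ^ 2 = ‖PrY a‖ ^ 2 + tY a ^ 2 := by
  rw [← real_inner_self_eq_norm_sq, inner_Yn, real_inner_self_eq_norm_sq, sq (tY a)]

lemma norm_toY_zero (x : En n) : ‖toY x 0‖ = ‖x‖ := by
  rw [← sq_eq_sq₀ (norm_nonneg _) (norm_nonneg _), norm_sq_Yn]
  simp

lemma toY_sub_of_mem_sliceOne (d : En n) {v : Yn n} (hv : v ∈ sliceOne n) :
    toY d 1 - v = toY (d - PrY v) 0 :=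
  Yn_ext (by simp) (by simp [show tY v = 1 from hv])

def scaleLast (β : ℝ) : Yn n →L[ℝ] Yn n :=
  (WithLp.prodContinuousLinearEquiv 2 ℝ (En n) ℝ).symm.toContinuousLinearMap ∘L
    ((ContinuousLinearMap.id ℝ (En n)).prodMap (β • ContinuousLinearMap.id ℝ ℝ)) ∘L
    (WithLp.prodContinuousLinearEquiv 2 ℝ (En n) ℝ).toContinuousLinearMap

@[simp] lemma scaleLast_apply (β : ℝ) (a : Yn n) : scaleLast β a = toY (PrY a) (β * tY a) := rfl

lemma scaleLast_isSymmetric (β : ℝ) :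
    ((scaleLast β : Yn n →L[ℝ] Yn n) : Yn n →ₗ[ℝ] Yn n).IsSymmetric := fun a b => by
  simp only [ContinuousLinearMap.coe_coe, scaleLast_apply, inner_Yn, PrY_toY, tY_toY]
  ring

lemma inner_scaleLast_self (β : ℝ) (a : Yn n) :
    ⟪scaleLast β a, a⟫ = ‖PrY a‖ ^ 2 + β * tY a ^ 2 := by
  rw [scaleLast_apply, inner_Yn, PrY_toY, tY_toY, real_inner_self_eq_norm_sq]
  ring

lemma norm_sq_le_inner_scaleLast_self {β : ℝ} (hβ : 1 ≤ β) (a : Yn n) :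
    ‖a‖ ^ 2 ≤ ⟪scaleLast β a, a⟫ := by
  rw [norm_sq_Yn, inner_scaleLast_self]
  nlinarith [sq_nonneg (tY a)]

lemma mul_norm_le_of_mem_metricProj {T : Set (Yn n)} (hT : ∀ c : ℝ, 0 < c → ∀ v ∈ T, c • v ∈ T)
    {d : En n} {v₀ : Yn n} (hv₀ : v₀ ∈ metricProj (T ∩ sliceOne n) (toY d 1)) {u : Yn n}
    (hu : u ∈ T) (hu0 : 0 < tY u) : tY u * ‖d - PrY v₀‖ ≤ ‖tY u • d - PrY u‖ := by
  obtain ⟨⟨-, hv₀1⟩, hproj⟩ := hv₀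
  have hv : (tY u)⁻¹ • u ∈ T ∩ sliceOne n :=
    ⟨hT _ (inv_pos.2 hu0) _ hu, inv_mul_cancel₀ hu0.ne'⟩
  have hmin := infDist_le_dist_of_mem hv (x := toY d 1)
  rw [← hproj, dist_eq_norm, toY_sub_of_mem_sliceOne d hv₀1, toY_sub_of_mem_sliceOne d hv.2,
    norm_toY_zero, norm_toY_zero] at hmin
  have hscale : tY u • (d - PrY ((tY u)⁻¹ • u)) = tY u • d - PrY u := by
    rw [PrY_smul, smul_sub, smul_smul, mul_inv_cancel₀ hu0.ne', one_smul]
  rw [← hscale, norm_smul, Real.norm_of_nonneg hu0.le]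
  gcongr

lemma norm_sq_add_mul_sq_le_of_mem_metricProj {T : Set (Yn n)}
    (hT : ∀ c : ℝ, 0 < c → ∀ v ∈ T, c • v ∈ T) {d : En n} {v₀ : Yn n}
    (hv₀ : v₀ ∈ metricProj (T ∩ sliceOne n) (toY d 1)) {β : ℝ} (hβ : ‖d - PrY v₀‖ + 1 ≤ β)
    {h : En n} {τ : ℝ} (hpen : ‖d - PrY v₀ + h‖ ^ 2 + β * τ ^ 2 ≤ ‖d - PrY v₀‖ ^ 2)
    (hvT : v₀ - β⁻¹ • toY h τ ∈ T) :
    ‖h‖ ^ 2 + β * τ ^ 2 ≤ -2 * τ * ⟪d - PrY v₀, PrY v₀⟫ + β⁻¹ * ‖h - τ • d‖ ^ 2 := by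
  set w := d - PrY v₀ with hw
  have hβ0 : 0 < β := by linarith [norm_nonneg w]
  have hτ : τ < β := by
    have hβ1 : 1 ≤ β := by linarith [norm_nonneg w]
    have : τ ^ 2 ≤ ‖w‖ ^ 2 := by
      nlinarith [sq_nonneg ‖w + h‖, mul_le_mul_of_nonneg_right hβ1 (sq_nonneg τ)]
    linarith [(abs_le_of_sq_le_sq' this (norm_nonneg w)).2]
  have htY : tY (v₀ - β⁻¹ • toY h τ) = 1 - β⁻¹ * τ := by
    simp [show tY v₀ = 1 from hv₀.1.2]
  have hc : 0 < 1 - β⁻¹ * τ := by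
    have : β⁻¹ * τ < 1 := by rw [inv_mul_lt_iff₀ hβ0]; linarith
    linarith
  have hmin := mul_norm_le_of_mem_metricProj hT hv₀ hvT (htY ▸ hc)
  rw [htY, show (1 - β⁻¹ * τ) • d - PrY (v₀ - β⁻¹ • toY h τ) = w + β⁻¹ • (h - τ • d) by
    simp only [PrY_sub, PrY_smul, PrY_toY, hw]; module] at hmin
  have hsq := pow_le_pow_left₀ (by positivity) hmin 2
  have hd : ⟪w, d⟫ = ‖w‖ ^ 2 + ⟪w, PrY v₀⟫ := by
    rw [← real_inner_self_eq_norm_sq, ← inner_add_right, hw, sub_add_cancel]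
  rw [norm_add_sq_real, inner_smul_right, inner_sub_right, real_inner_smul_right, hd, norm_smul,
    Real.norm_of_nonneg (inv_nonneg.2 hβ0.le)] at hsq
  rw [norm_add_sq_real] at hpen
  have hdiv : -2 * τ * ‖w‖ ^ 2 + β⁻¹ * τ ^ 2 * ‖w‖ ^ 2 ≤
      2 * (⟪w, h⟫ - τ * (‖w‖ ^ 2 + ⟪w, PrY v₀⟫)) + β⁻¹ * ‖h - τ • d‖ ^ 2 := by
    refine le_of_mul_le_mul_left ?_ (inv_pos.2 hβ0)
    nlinarith
  nlinarith [mul_nonneg (inv_nonneg.2 hβ0.le) (mul_nonneg (sq_nonneg τ) (sq_nonneg ‖w‖))]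

lemma exists_mem_limitingNormalCone_approx {K : Set (Yn n)} (hK : IsClosed K) {y₀ : Yn n}
    (hy₀ : y₀ ∈ K) {d : En n} {v₀ : Yn n}
    (hv₀ : v₀ ∈ metricProj (bouligandTangentCone K y₀ ∩ sliceOne n) (toY d 1)) :
    ∃ C, ∀ β, ‖d - PrY v₀‖ + 1 ≤ β → ∃ ζ ∈ limitingNormalCone K y₀,
      β * ‖PrY ζ - (d - PrY v₀)‖ ^ 2 ≤ C ∧ tY ζ ^ 2 ≤ C := by
  set w := d - PrY v₀
  set κ := ⟪w, PrY v₀⟫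
  set M := ((2 + ‖d‖) * ‖w‖) ^ 2
  refine ⟨4 * κ ^ 2 + 2 * M, fun β hβ => ?_⟩
  have hβ1 : 1 ≤ β := by linarith [norm_nonneg w]
  obtain ⟨θ, hpen, hT, hN⟩ := exists_penalized_limitingNormal hK hy₀ hv₀.1.1
    (scaleLast_isSymmetric β) (norm_sq_le_inner_scaleLast_self hβ1) (toY w 0)
    (inv_pos.2 (zero_lt_one.trans_le hβ1))
  refine ⟨_, hN, ?_⟩
  obtain ⟨h, τ, rfl⟩ : ∃ h τ, θ = toY h τ := ⟨_, _, rfl⟩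
  simp only [inner_scaleLast_self, PrY_add, tY_add, PrY_toY, tY_toY, zero_add, ne_eq,
    OfNat.ofNat_ne_zero, not_false_eq_true, zero_pow, mul_zero, add_zero] at hpen
  simp only [scaleLast_apply, PrY_add, tY_add, PrY_toY, tY_toY, zero_add, add_sub_cancel_left]
  have hkey := norm_sq_add_mul_sq_le_of_mem_metricProj
    (fun c hc v hv => smul_mem_bouligandTangentCone hv hc) hv₀ hβ hpen hT
  have hpen' : ‖w + h‖ ^ 2 ≤ ‖w‖ ^ 2 ∧ τ ^ 2 ≤ ‖w‖ ^ 2 := by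
    constructor <;> nlinarith [sq_nonneg ‖w + h‖, mul_le_mul_of_nonneg_right hβ1 (sq_nonneg τ)]
  have hτ : |τ| ≤ ‖w‖ := abs_le_of_sq_le_sq hpen'.2 (norm_nonneg w)
  have hh : ‖w + h‖ ≤ ‖w‖ :=
    (pow_le_pow_iff_left₀ (norm_nonneg _) (norm_nonneg _) two_ne_zero).1 hpen'.1
  have hM : ‖h - τ • d‖ ^ 2 ≤ M := by
    refine pow_le_pow_left₀ (norm_nonneg _) ?_ 2
    calc ‖h - τ • d‖ ≤ ‖(w + h) - w‖ + |τ| * ‖d‖ := by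
          rw [add_sub_cancel_left, ← Real.norm_eq_abs, ← norm_smul]; exact norm_sub_le _ _
      _ ≤ (‖w + h‖ + ‖w‖) + ‖w‖ * ‖d‖ := by gcongr; exact norm_sub_le _ _
      _ ≤ (2 + ‖d‖) * ‖w‖ := by linarith
  have hβ0 : 0 < β := zero_lt_one.trans_le hβ1
  have hmul : β * ‖h‖ ^ 2 + (β * τ) ^ 2 ≤ -2 * (β * τ) * κ + M := by
    have := mul_le_mul_of_nonneg_left (hkey.trans (by gcongr)) hβ0.le
    rw [mul_add, mul_add, ← mul_assoc β β⁻¹, mul_inv_cancel₀ hβ0.ne', one_mul] at this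
    linarith
  have hM0 : 0 ≤ M := sq_nonneg _
  constructor
  · nlinarith [sq_nonneg (β * τ + κ)]
  · nlinarith [sq_nonneg (β * τ + 2 * κ), mul_nonneg hβ0.le (sq_nonneg ‖h‖)]

lemma exists_mem_PrY_eq_of_approx {N : Set (Yn n)} (hN : IsClosed N) (x : En n)
    {C β₀ : ℝ} (happrox : ∀ β, β₀ ≤ β → ∃ ζ ∈ N, β * ‖PrY ζ - x‖ ^ 2 ≤ C ∧ tY ζ ^ 2 ≤ C) :
    ∃ ζ ∈ N, PrY ζ = x := by
  set β : ℕ → ℝ := fun i => max β₀ 1 + i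
  have hβ : ∀ i : ℕ, β₀ ≤ β i ∧ 1 ≤ β i ∧ (i : ℝ) ≤ β i ∧ β i ≤ β (i + 1) := fun i => by
    have := le_max_left β₀ 1
    have := le_max_right β₀ 1
    have : (0 : ℝ) ≤ i := i.cast_nonneg
    simp only [β]
    push_cast
    refine ⟨?_, ?_, ?_, ?_⟩ <;> linarith
  set S : ℕ → Set (Yn n) := fun i =>
    N ∩ {ζ | β i * ‖PrY ζ - x‖ ^ 2 ≤ C} ∩ {ζ | tY ζ ^ 2 ≤ C}
  have hsub : ∀ i, S (i + 1) ⊆ S i := fun i ζ ⟨⟨hζN, h₁⟩, h₂⟩ =>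
    ⟨⟨hζN, (mul_le_mul_of_nonneg_right (hβ i).2.2.2 (sq_nonneg ‖PrY ζ - x‖)).trans h₁⟩, h₂⟩
  have hne : ∀ i, (S i).Nonempty := fun i =>
    let ⟨ζ, hζN, h₁, h₂⟩ := happrox (β i) (hβ i).1
    ⟨ζ, ⟨hζN, h₁⟩, h₂⟩
  have hclosed : ∀ i, IsClosed (S i) := fun i =>
    (hN.inter (isClosed_le (by fun_prop) continuous_const)).inter
      (isClosed_le (by fun_prop) continuous_const)
  have hcpt : IsCompact (S 0) := by
    refine (isCompact_closedBall (toY x 0) √(2 * C)).of_isClosed_subset (hclosed 0)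
      fun ζ ⟨⟨_, (h₁ : β 0 * ‖PrY ζ - x‖ ^ 2 ≤ C)⟩, (h₂ : tY ζ ^ 2 ≤ C)⟩ => ?_
    have h₀ := (hβ 0).2.1
    rw [mem_closedBall, dist_eq_norm,
      Real.le_sqrt (norm_nonneg _) (by nlinarith [sq_nonneg (tY ζ)]), norm_sq_Yn]
    simp only [PrY_sub, PrY_toY, tY_sub, tY_toY, sub_zero]
    nlinarith [sq_nonneg ‖PrY ζ - x‖]
  obtain ⟨ζ, hζ⟩ :=
    IsCompact.nonempty_iInter_of_sequence_nonempty_isCompact_isClosed S hsub hne hcpt hclosed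
  rw [mem_iInter] at hζ
  refine ⟨ζ, (hζ 0).1.1, ?_⟩
  by_contra hζx
  have hpos : 0 < ‖PrY ζ - x‖ ^ 2 := by
    have := norm_pos_iff.2 (sub_ne_zero.2 hζx)
    positivity
  obtain ⟨i, hi⟩ := exists_nat_gt (C / ‖PrY ζ - x‖ ^ 2)
  rw [div_lt_iff₀ hpos] at hi
  have hi' : β i * ‖PrY ζ - x‖ ^ 2 ≤ C := (hζ i).1.2
  nlinarith [(hβ i).2.2.1]

end Slice

/-- If `v₀` is in the metric projection of `d₁ = (d,1)` onto
`T_K(y₀) ∩ (ℝⁿ × {1})`, then `d₁ - v₀ = (Pr ζ, 0)` for some limiting normal `ζ ∈ N_K(y₀)`. -/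
theorem statement1 (n : ℕ) (K : Set (Yn n)) (hK : IsClosed K) (y₀ : Yn n) (hy₀ : y₀ ∈ K)
    (d : En n) (v₀ : Yn n)
    (hv₀ : v₀ ∈ metricProj (bouligandTangentCone K y₀ ∩ sliceOne n) (toY d 1)) :
    ∃ ζ ∈ limitingNormalCone K y₀, toY d 1 - v₀ = toY (PrY ζ) 0 := by
  obtain ⟨C, happrox⟩ := exists_mem_limitingNormalCone_approx hK hy₀ hv₀
  obtain ⟨ζ, hζN, hζ⟩ :=
    exists_mem_PrY_eq_of_approx (isClosed_limitingNormalCone K y₀) (d - PrY v₀) happrox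
  exact ⟨ζ, hζN, by rw [hζ, toY_sub_of_mem_sliceOne d hv₀.1.2]⟩
end
end

section
/- Let c ∈ ℝⁿ, R ≥ 0, and let S be a subset of the closed ball of radius R centered at c. If z belongs to the closure of the convex hull of S and ‖z − c‖ = R, then z belongs to the closure of S. -/
open Set Metric
open scoped RealInnerProductSpace

/-!
If `z` were at positive distance `ε` from `S`, then, since every point of `S` lies in the ball
whose boundary passes through `z`, all of `S` would lie in the closed half-space
`⟪x - c, z - c⟫ ≤ R² - ε² / 2`. That half-space is closed and convex, so it also contains the
closure of the convex hull of `S`, but `z` violates it: `⟪z - c, z - c⟫ = R²`.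
-/

theorem le_of_mem_closure_convexHull {E : Type*} [AddCommGroup E] [TopologicalSpace E]
    [Module ℝ E] (f : E →L[ℝ] ℝ) {S : Set E} {a : ℝ} (hS : ∀ x ∈ S, f x ≤ a) {z : E}
    (hz : z ∈ closure (convexHull ℝ S)) : f z ≤ a :=
  closure_minimal (convexHull_min hS (convex_halfSpace_le f.isLinear a))
    (isClosed_le f.continuous continuous_const) hz

section InnerProductSpace

variable {E : Type*} [NormedAddCommGroup E] [InnerProductSpace ℝ E]

theorem two_mul_inner_sub_add_dist_sq_le {c x z : E} {R : ℝ} (hx : x ∈ closedBall c R)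
    (hz : z ∈ closedBall c R) : 2 * ⟪x - c, z - c⟫ + dist x z ^ 2 ≤ 2 * R ^ 2 := by
  rw [mem_closedBall_iff_norm] at hx hz
  have hxz : dist x z ^ 2 = ‖x - c‖ ^ 2 - 2 * ⟪x - c, z - c⟫ + ‖z - c‖ ^ 2 := by
    rw [dist_eq_norm, ← norm_sub_sq_real, sub_sub_sub_cancel_right]
  rw [hxz]
  linarith [pow_le_pow_left₀ (norm_nonneg _) hx 2, pow_le_pow_left₀ (norm_nonneg _) hz 2]

theorem mem_closure_of_mem_closure_convexHull_of_mem_sphere {S : Set E} {c z : E} {R : ℝ}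
    (hS : S ⊆ closedBall c R) (hz : z ∈ closure (convexHull ℝ S)) (hzR : z ∈ sphere c R) :
    z ∈ closure S := by
  by_contra hzS
  obtain ⟨ε, hε, hfar⟩ : ∃ ε > 0, ∀ x ∈ S, ε ≤ dist z x := by
    simpa [Metric.mem_closure_iff] using hzS
  have hzR' : ‖z - c‖ = R := mem_sphere_iff_norm.mp hzR
  have hhalf : ∀ x ∈ S, innerSL ℝ (z - c) x ≤ ⟪z - c, c⟫ + (R ^ 2 - ε ^ 2 / 2) := by
    intro x hx
    have hε_le : ε ^ 2 ≤ dist x z ^ 2 := by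
      rw [dist_comm]; exact pow_le_pow_left₀ hε.le (hfar x hx) 2
    have hball := two_mul_inner_sub_add_dist_sq_le (hS hx) (sphere_subset_closedBall hzR)
    rw [innerSL_apply_apply, ← sub_le_iff_le_add', ← inner_sub_right, real_inner_comm]
    linarith
  have hz_le := le_of_mem_closure_convexHull _ hhalf hz
  rw [innerSL_apply_apply, ← sub_le_iff_le_add', ← inner_sub_right, real_inner_self_eq_norm_sq,
    hzR'] at hz_le
  linarith [pow_pos hε 2]

end InnerProductSpace

theorem statement6_general (n : ℕ) (c : EuclideanSpace ℝ (Fin n)) (R : ℝ)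
    (S : Set (EuclideanSpace ℝ (Fin n))) (hS : S ⊆ closedBall c R)
    (z : EuclideanSpace ℝ (Fin n)) (hz : z ∈ closure (convexHull ℝ S)) (hzR : ‖z - c‖ = R) :
    z ∈ closure S :=
  mem_closure_of_mem_closure_convexHull_of_mem_sphere hS hz (mem_sphere_iff_norm.mpr hzR)

/-- If `S` lies in the closed ball `B̄(c,R)` and `z` is a point of the
closure of the convex hull of `S` with `‖z - c‖ = R`, then `z ∈ closure S`. -/
theorem statement6 (n : ℕ) (c : EuclideanSpace ℝ (Fin n)) (R : ℝ) (hR : 0 ≤ R)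
    (S : Set (EuclideanSpace ℝ (Fin n))) (hS : S ⊆ closedBall c R)
    (z : EuclideanSpace ℝ (Fin n)) (hz : z ∈ closure (convexHull ℝ S)) (hzR : ‖z - c‖ = R) :
    z ∈ closure S :=
  statement6_general n c R S hS z hz hzR
end

section
/- Let a > 0 and b > 0, and define K := {(x,0) : x ≤ a} ∪ {(x,b) : x ≤ a} ∪ {(0,y) : y ≤ 0} ∪ {(a,y) : y ≤ b} ⊆ ℝ². Then for every point p ∈ K with p ≠ (a,b), the cone of limiting normals N_K(p) is contained in (ℝ × {0}) ∪ ({0} × ℝ), the set of vectors lying along the coordinate axes. -/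
/-!
A proximal normal at `q` makes a non-positive inner product with every direction `e` along which
`K` contains a short segment `q + s • e`, `0 < s`: moving from `q` a little along such a
direction would bring `q + t • ζ` strictly closer to `K`. Hence it is orthogonal to every line
segment of `K` through `q`. Every point of the base cell except the corner `(a, b)` lies in the
interior of a horizontal or a vertical segment of the cell, so proximal normals there lie on a
coordinate axis. The union of the axes is closed, so it also contains the limits of such normals.
-/

open Set Filter Metric MeasureTheory Topology

noncomputable section

/-- The "base cell" `K ⊆ ℝ²` of the example. -/
def baseCell (a b : ℝ) : Set (EuclideanSpace ℝ (Fin 2)) :=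
  {p | (p 1 = 0 ∧ p 0 ≤ a) ∨ (p 1 = b ∧ p 0 ≤ a) ∨
       (p 0 = 0 ∧ p 1 ≤ 0) ∨ (p 0 = a ∧ p 1 ≤ b)}

open scoped RealInnerProductSpace

section ProximalNormal

variable {E : Type*} [NormedAddCommGroup E] [InnerProductSpace ℝ E] {K : Set E} {q e ζ : E}

theorem inner_nonpos_of_mem_proxNormalCone (hK : ∀ᶠ s in 𝓝[>] (0 : ℝ), q + s • e ∈ K)
    (hζ : ζ ∈ proxNormalCone K q) : ⟪ζ, e⟫ ≤ 0 := by
  obtain ⟨t, ht, hdist⟩ := hζ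
  by_contra! hpos
  have hsmall : ∀ᶠ s in 𝓝[>] (0 : ℝ), s * ‖e‖ ^ 2 < 2 * t * ⟪ζ, e⟫ := by
    refine (Tendsto.eventually_lt_const (by positivity) ?_).filter_mono nhdsWithin_le_nhds
    exact (continuous_mul_const _).tendsto' 0 0 (zero_mul _)
  obtain ⟨s, hsK, hs, hs0⟩ := (hK.and (hsmall.and self_mem_nhdsWithin)).exists
  have hcloser : ‖t • ζ - s • e‖ ^ 2 < (t * ‖ζ‖) ^ 2 := by
    rw [norm_sub_sq_real, real_inner_smul_left, real_inner_smul_right, norm_smul, norm_smul,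
      Real.norm_of_nonneg ht.le, Real.norm_of_nonneg (le_of_lt hs0)]
    nlinarith [mul_lt_mul_of_pos_left hs (show (0 : ℝ) < s from hs0)]
  have hle : t * ‖ζ‖ ≤ ‖t • ζ - s • e‖ := by
    simpa [hdist, dist_eq_norm] using infDist_le_dist_of_mem (x := q + t • ζ) hsK
  linarith [pow_le_pow_left₀ (by positivity) hle 2]

theorem inner_eq_zero_of_mem_proxNormalCone (hK : ∀ᶠ s in 𝓝 (0 : ℝ), q + s • e ∈ K)
    (hζ : ζ ∈ proxNormalCone K q) : ⟪ζ, e⟫ = 0 := by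
  have hK_neg : ∀ᶠ s in 𝓝 (0 : ℝ), q + s • -e ∈ K := by
    filter_upwards [(continuous_neg.tendsto' 0 0 neg_zero).eventually hK] with s hs
    rwa [smul_neg, ← neg_smul]
  have h₁ := inner_nonpos_of_mem_proxNormalCone (hK.filter_mono nhdsWithin_le_nhds) hζ
  have h₂ := inner_nonpos_of_mem_proxNormalCone (hK_neg.filter_mono nhdsWithin_le_nhds) hζ
  rw [inner_neg_right] at h₂
  linarith

end ProximalNormal

theorem limitingNormalCone_subset_of_isClosed {X : Type*} [NormedAddCommGroup X]
    [NormedSpace ℝ X] {K C : Set X} {p : X} (hC : IsClosed C)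
    (hprox : ∀ᶠ q in 𝓝 p, q ∈ K → proxNormalCone K q ⊆ C) :
    limitingNormalCone K p ⊆ C := by
  rintro ζ ⟨yk, ζk, hyK, hζk, hy, hζ⟩
  refine hC.mem_of_tendsto hζ ?_
  filter_upwards [hy.eventually hprox] with k hk
  exact hk (hyK k) (hζk k)

theorem baseCell_horizontal_or_vertical {a b : ℝ} (ha : 0 < a) (hb : 0 < b)
    {q : EuclideanSpace ℝ (Fin 2)} (hq : q ∈ baseCell a b) (hq' : ¬(q 0 = a ∧ q 1 = b)) :
    (∀ᶠ s in 𝓝 (0 : ℝ), q + s • EuclideanSpace.single 0 1 ∈ baseCell a b) ∨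
      ∀ᶠ s in 𝓝 (0 : ℝ), q + s • EuclideanSpace.single 1 1 ∈ baseCell a b := by
  simp only [baseCell, mem_ofPred_eq] at hq ⊢
  simp only [PiLp.add_apply, PiLp.smul_apply, PiLp.single_apply, smul_eq_mul, one_ne_zero,
    zero_ne_one, if_true, if_false, mul_one, mul_zero, add_zero]
  rcases hq with ⟨h1, h0⟩ | ⟨h1, h0⟩ | ⟨h0, h1⟩ | ⟨h0, h1⟩
  · rcases h0.lt_or_eq with h0 | rfl
    · left
      filter_upwards [Iio_mem_nhds (sub_pos.2 h0)] with s hs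
      left; exact ⟨h1, by linarith [mem_Iio.1 hs]⟩
    · right
      filter_upwards [Iio_mem_nhds hb] with s hs
      right; right; right; exact ⟨rfl, by linarith [mem_Iio.1 hs]⟩
  · rcases h0.lt_or_eq with h0 | rfl
    · left
      filter_upwards [Iio_mem_nhds (sub_pos.2 h0)] with s hs
      right; left; exact ⟨h1, by linarith [mem_Iio.1 hs]⟩
    · exact absurd ⟨rfl, h1⟩ hq'
  · rcases h1.lt_or_eq with h1 | h1
    · right
      filter_upwards [Iio_mem_nhds (neg_pos.2 h1)] with s hs
      right; right; left; exact ⟨h0, by linarith [mem_Iio.1 hs]⟩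
    · left
      filter_upwards [Iio_mem_nhds ha] with s hs
      left; exact ⟨h1, by linarith [mem_Iio.1 hs]⟩
  · rcases h1.lt_or_eq with h1 | rfl
    · right
      filter_upwards [Iio_mem_nhds (sub_pos.2 h1)] with s hs
      right; right; right; exact ⟨h0, by linarith [mem_Iio.1 hs]⟩
    · exact absurd ⟨h0, rfl⟩ hq'

theorem proxNormalCone_baseCell_subset_axes {a b : ℝ} (ha : 0 < a) (hb : 0 < b)
    {q : EuclideanSpace ℝ (Fin 2)} (hq : q ∈ baseCell a b) (hq' : ¬(q 0 = a ∧ q 1 = b)) :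
    proxNormalCone (baseCell a b) q ⊆
      {ζ : EuclideanSpace ℝ (Fin 2) | ζ 1 = 0} ∪ {ζ | ζ 0 = 0} := by
  intro ζ hζ
  rcases baseCell_horizontal_or_vertical ha hb hq hq' with hK | hK
  · right
    simpa [EuclideanSpace.inner_single_right] using inner_eq_zero_of_mem_proxNormalCone hK hζ
  · left
    simpa [EuclideanSpace.inner_single_right] using inner_eq_zero_of_mem_proxNormalCone hK hζ

theorem statement13_general (a b : ℝ) (ha : 0 < a) (hb : 0 < b)
    (p : EuclideanSpace ℝ (Fin 2))
    (hpv : p ≠ ![a, b]) :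
    limitingNormalCone (baseCell a b) p ⊆
      {ζ : EuclideanSpace ℝ (Fin 2) | ζ 1 = 0} ∪ {ζ | ζ 0 = 0} := by
  have hclosed : IsClosed ({ζ : EuclideanSpace ℝ (Fin 2) | ζ 1 = 0} ∪ {ζ | ζ 0 = 0}) :=
    (isClosed_eq (by fun_prop) continuous_const).union (isClosed_eq (by fun_prop) continuous_const)
  have hnear : ∀ᶠ q in 𝓝 p, q.ofLp ≠ ![a, b] :=
    (PiLp.continuous_ofLp 2 _).continuousAt.eventually_ne hpv
  refine limitingNormalCone_subset_of_isClosed hclosed ?_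
  filter_upwards [hnear] with q hq' hq
  exact proxNormalCone_baseCell_subset_axes ha hb hq fun h => hq' (funext (Fin.forall_fin_two.2 h))

/-- At every point of the base cell other than the vertex `(a,b)`, the cone
of limiting normals is contained in the union of the two coordinate axes. -/
theorem statement13 (a b : ℝ) (ha : 0 < a) (hb : 0 < b)
    (p : EuclideanSpace ℝ (Fin 2)) (hp : p ∈ baseCell a b)
    (hpv : p ≠ ![a, b]) :
    limitingNormalCone (baseCell a b) p ⊆
      {ζ : EuclideanSpace ℝ (Fin 2) | ζ 1 = 0} ∪ {ζ | ζ 0 = 0} :=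
  statement13_general a b ha hb p hpv
end
end

section
/- Let a > 0 and b > 0, and define K := {(x,0) : x ≤ a} ∪ {(x,b) : x ≤ a} ∪ {(0,y) : y ≤ 0} ∪ {(a,y) : y ≤ b} ⊆ ℝ². Then for every point p ∈ K with p ≠ (a,b), the metric projection of the vector (1,1) onto the Bouligand tangent cone T_K(p) is nonempty and contained in the two-element set {(1,0), (0,1)}. -/
open Set Filter Metric MeasureTheory Topology

noncomputable section

/-! Away from the vertex `(a, b)`, the cell `K` near `p` lies in the half-plane `{y ≤ p₁}` (on the
horizontal edges, including the corner `(0, 0)`) or `{x ≤ p₀}` (on the vertical rays, including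
`(a, 0)`), and it contains a segment leaving `p` in direction `(1, 0)`, resp. `(0, 1)`. Hence the
tangent cone contains that direction and lies in `{y ≤ 0}`, resp. `{x ≤ 0}`, and in either half-plane
the chosen direction is the unique point nearest to `(1, 1)`. -/

section TangentCone

variable {X : Type*} [NormedAddCommGroup X] [NormedSpace ℝ X]

theorem mem_bouligandTangentCone_of_segment_subset {K : Set X} {p v : X} {ε : ℝ} (hε : 0 < ε)
    (h : ∀ t, 0 < t → t ≤ ε → p + t • v ∈ K) : v ∈ bouligandTangentCone K p := by
  refine ⟨fun k => ε / (k + 1), fun _ => v, fun k => by positivity, ?_, tendsto_const_nhds,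
    fun k => h _ (by positivity) (div_le_self hε.le (by linarith [k.cast_nonneg (α := ℝ)]))⟩
  simpa [div_eq_mul_inv] using tendsto_one_div_add_atTop_nhds_zero_nat.const_mul ε

theorem apply_nonpos_of_mem_bouligandTangentCone {K : Set X} {p v : X} (f : X →L[ℝ] ℝ)
    (hK : ∀ᶠ q in 𝓝 p, q ∈ K → f q ≤ f p) (hv : v ∈ bouligandTangentCone K p) : f v ≤ 0 := by
  obtain ⟨t, w, ht, ht0, hw, hmem⟩ := hv
  have hpt : Tendsto (fun k => p + t k • w k) atTop (𝓝 p) := by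
    simpa using tendsto_const_nhds.add (ht0.smul hw)
  have hfw : ∀ᶠ k in atTop, f (w k) ≤ 0 := by
    filter_upwards [hpt.eventually hK] with k hk
    have hstep : t k * f (w k) ≤ 0 := by simpa using hk (hmem k)
    exact nonpos_of_mul_nonpos_right hstep (ht k)
  exact le_of_tendsto ((f.continuous.tendsto v).comp hw) hfw

end TangentCone

theorem metricProj_eq_singleton {X : Type*} [NormedAddCommGroup X] {C : Set X} {d c : X}
    (hc : c ∈ C) (h : ∀ v ∈ C, v ≠ c → ‖d - c‖ < ‖d - v‖) : metricProj C d = {c} := by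
  have hle : ∀ v ∈ C, ‖d - c‖ ≤ ‖d - v‖ := fun v hv => by
    rcases eq_or_ne v c with rfl | hne
    exacts [le_rfl, (h v hv hne).le]
  have hdist : infDist d C = ‖d - c‖ :=
    le_antisymm ((infDist_le_dist_of_mem hc).trans_eq (dist_eq_norm d c))
      ((le_infDist ⟨c, hc⟩).2 fun v hv => (hle v hv).trans_eq (dist_eq_norm d v).symm)
  ext v
  simp only [metricProj, mem_ofPred_eq, mem_singleton_iff, hdist]
  refine ⟨fun ⟨hv, heq⟩ => by_contra fun hne => (h v hv hne).ne' heq, ?_⟩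
  rintro rfl
  exact ⟨hc, rfl⟩

theorem norm_one_one_sub_sq (v : EuclideanSpace ℝ (Fin 2)) :
    ‖!₂[1, 1] - v‖ ^ 2 = (1 - v 0) ^ 2 + (1 - v 1) ^ 2 := by
  simp [EuclideanSpace.norm_sq_eq, Fin.sum_univ_two]

theorem metricProj_one_one_of_forall_snd_nonpos {C : Set (EuclideanSpace ℝ (Fin 2))}
    (hC : !₂[1, 0] ∈ C) (h : ∀ v ∈ C, v 1 ≤ 0) : metricProj C !₂[1, 1] = {!₂[1, 0]} := by
  refine metricProj_eq_singleton hC fun v hv hne => lt_of_pow_lt_pow_left₀ 2 (norm_nonneg _) ?_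
  have hdist : ‖(!₂[1, 1] - !₂[1, 0] : EuclideanSpace ℝ (Fin 2))‖ ^ 2 = 1 := by
    simp [norm_one_one_sub_sq]
  rw [hdist, norm_one_one_sub_sq]
  have hv1 := h v hv
  by_contra! hge
  have h1 : v 1 = 0 := by nlinarith
  have h0 : v 0 = 1 := by nlinarith
  exact hne (by ext i; fin_cases i <;> simp [h0, h1])

theorem metricProj_one_one_of_forall_fst_nonpos {C : Set (EuclideanSpace ℝ (Fin 2))}
    (hC : !₂[0, 1] ∈ C) (h : ∀ v ∈ C, v 0 ≤ 0) : metricProj C !₂[1, 1] = {!₂[0, 1]} := by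
  refine metricProj_eq_singleton hC fun v hv hne => lt_of_pow_lt_pow_left₀ 2 (norm_nonneg _) ?_
  have hdist : ‖(!₂[1, 1] - !₂[0, 1] : EuclideanSpace ℝ (Fin 2))‖ ^ 2 = 1 := by
    simp [norm_one_one_sub_sq]
  rw [hdist, norm_one_one_sub_sq]
  have hv0 := h v hv
  by_contra! hge
  have h0 : v 0 = 0 := by nlinarith
  have h1 : v 1 = 1 := by nlinarith
  exact hne (by ext i; fin_cases i <;> simp [h0, h1])

section BaseCell

variable {a b : ℝ} {p : EuclideanSpace ℝ (Fin 2)}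

theorem baseCell_cases (ha : 0 < a) (hb : 0 < b) (hp : p ∈ baseCell a b) (hpv : p ≠ !₂[a, b]) :
    ((p 1 = 0 ∨ p 1 = b) ∧ p 0 < a) ∨ (p 0 = a ∧ p 1 < b) ∨ (p 0 = 0 ∧ p 1 < 0) := by
  have hvtx : p 0 = a → p 1 ≠ b := fun h0 h1 => hpv (by ext i; fin_cases i <;> simp [h0, h1])
  rcases hp with ⟨h1, h0⟩ | ⟨h1, h0⟩ | ⟨h0, h1⟩ | ⟨h0, h1⟩
  · rcases h0.lt_or_eq with h0 | h0
    exacts [Or.inl ⟨Or.inl h1, h0⟩, Or.inr (Or.inl ⟨h0, h1 ▸ hb⟩)]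
  · exact Or.inl ⟨Or.inr h1, h0.lt_of_ne fun h => hvtx h h1⟩
  · rcases h1.lt_or_eq with h1 | h1
    exacts [Or.inr (Or.inr ⟨h0, h1⟩), Or.inl ⟨Or.inl h1, h0 ▸ ha⟩]
  · exact Or.inr (Or.inl ⟨h0, h1.lt_of_ne (hvtx h0)⟩)

theorem fst_le_of_mem_baseCell (ha : 0 ≤ a) {q : EuclideanSpace ℝ (Fin 2)}
    (hq : q ∈ baseCell a b) : q 0 ≤ a := by
  rcases hq with ⟨-, h⟩ | ⟨-, h⟩ | ⟨h, -⟩ | ⟨h, -⟩ <;> linarith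

theorem eventually_snd_le_of_mem_baseCell (hb : 0 < b) (hp1 : p 1 = 0 ∨ p 1 = b) (hp0 : p 0 < a) :
    ∀ᶠ q in 𝓝 p, q ∈ baseCell a b → q 1 ≤ p 1 := by
  have hq0 := ((PiLp.continuous_apply 2 _ 0).tendsto p).eventually_lt_const hp0
  have hq1 := ((PiLp.continuous_apply 2 _ 1).tendsto p).eventually (ball_mem_nhds _ hb)
  filter_upwards [hq0, hq1] with q hq0 hq1 hq
  rw [Real.dist_eq, abs_lt] at hq1
  rcases hq with ⟨h, -⟩ | ⟨h, -⟩ | ⟨-, h⟩ | ⟨h, -⟩ <;> rcases hp1 with hp1 | hp1 <;> linarith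

theorem eventually_fst_le_of_mem_baseCell (ha : 0 < a) (hb : 0 < b) (hp0 : p 0 = 0)
    (hp1 : p 1 < 0) : ∀ᶠ q in 𝓝 p, q ∈ baseCell a b → q 0 ≤ p 0 := by
  have hq0 := ((PiLp.continuous_apply 2 _ 0).tendsto p).eventually_lt_const (hp0 ▸ ha)
  have hq1 := ((PiLp.continuous_apply 2 _ 1).tendsto p).eventually_lt_const hp1
  filter_upwards [hq0, hq1] with q hq0 hq1 hq
  rcases hq with ⟨h, -⟩ | ⟨h, -⟩ | ⟨h, -⟩ | ⟨h, -⟩ <;> linarith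

theorem one_zero_mem_bouligandTangentCone_baseCell (hp1 : p 1 = 0 ∨ p 1 = b) (hp0 : p 0 < a) :
    !₂[1, 0] ∈ bouligandTangentCone (baseCell a b) p := by
  refine mem_bouligandTangentCone_of_segment_subset (sub_pos.2 hp0) fun t _ hta => ?_
  have hx : (p + t • !₂[1, 0] : EuclideanSpace ℝ (Fin 2)) 0 = p 0 + t := by simp
  have hy : (p + t • !₂[1, 0] : EuclideanSpace ℝ (Fin 2)) 1 = p 1 := by simp
  have hxa : (p + t • !₂[1, 0] : EuclideanSpace ℝ (Fin 2)) 0 ≤ a := by rw [hx]; linarith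
  rcases hp1 with h | h
  exacts [Or.inl ⟨hy.trans h, hxa⟩, Or.inr (Or.inl ⟨hy.trans h, hxa⟩)]

theorem zero_one_mem_bouligandTangentCone_baseCell
    (hp : (p 0 = a ∧ p 1 < b) ∨ (p 0 = 0 ∧ p 1 < 0)) :
    !₂[0, 1] ∈ bouligandTangentCone (baseCell a b) p := by
  have hx : ∀ t : ℝ, (p + t • !₂[0, 1] : EuclideanSpace ℝ (Fin 2)) 0 = p 0 := by simp
  have hy : ∀ t : ℝ, (p + t • !₂[0, 1] : EuclideanSpace ℝ (Fin 2)) 1 = p 1 + t := by simp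
  rcases hp with ⟨h0, h1⟩ | ⟨h0, h1⟩
  · refine mem_bouligandTangentCone_of_segment_subset (sub_pos.2 h1) fun t _ ht => ?_
    exact Or.inr (Or.inr (Or.inr ⟨(hx t).trans h0, by rw [hy]; linarith⟩))
  · refine mem_bouligandTangentCone_of_segment_subset (neg_pos.2 h1) fun t _ ht => ?_
    exact Or.inr (Or.inr (Or.inl ⟨(hx t).trans h0, by rw [hy]; linarith⟩))

end BaseCell

/-- At every point of the base cell other than the vertex `(a,b)`, the
metric projection of `(1,1)` on the Bouligand tangent cone is nonempty and contained in
`{(1,0), (0,1)}`. -/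
theorem statement14 (a b : ℝ) (ha : 0 < a) (hb : 0 < b)
    (p : EuclideanSpace ℝ (Fin 2)) (hp : p ∈ baseCell a b)
    (hpv : p ≠ !₂[a, b]) :
    (metricProj (bouligandTangentCone (baseCell a b) p) !₂[1, 1]).Nonempty ∧
      metricProj (bouligandTangentCone (baseCell a b) p) !₂[1, 1] ⊆
        {!₂[1, 0], !₂[0, 1]} := by
  suffices metricProj (bouligandTangentCone (baseCell a b) p) !₂[1, 1] = {!₂[1, 0]} ∨
      metricProj (bouligandTangentCone (baseCell a b) p) !₂[1, 1] = {!₂[0, 1]} by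
    rcases this with h | h <;> rw [h] <;> simp
  rcases baseCell_cases ha hb hp hpv with ⟨hp1, hp0⟩ | hside
  · refine Or.inl (metricProj_one_one_of_forall_snd_nonpos
      (one_zero_mem_bouligandTangentCone_baseCell hp1 hp0) fun v hv => ?_)
    exact apply_nonpos_of_mem_bouligandTangentCone (EuclideanSpace.proj 1)
      (eventually_snd_le_of_mem_baseCell hb hp1 hp0) hv
  · refine Or.inr (metricProj_one_one_of_forall_fst_nonpos
      (zero_one_mem_bouligandTangentCone_baseCell hside) fun v hv => ?_)
    refine apply_nonpos_of_mem_bouligandTangentCone (EuclideanSpace.proj 0) ?_ hv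
    rcases hside with ⟨hp0, -⟩ | ⟨hp0, hp1⟩
    · exact Eventually.of_forall fun q hq => (fst_le_of_mem_baseCell ha.le hq).trans_eq hp0.symm
    · exact eventually_fst_le_of_mem_baseCell ha hb hp0 hp1
end
end
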